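/- arXiv:1102.0366 — 3 statements merged into one kernel-verified Lean document; each statement's English description precedes it below -/
import Mathlib

section
/- Let B = P ⊗_k A where P is a commutative k-algebra that is an integral domain and A = k⟨y_1,…,y_n⟩ is the free associative algebra, so B is the free associative algebra over P. If f, g ∈ B are nonzero homogeneous elements (in total degree in the y_i) that are left dependent over B (i.e., there exist u, v ∈ B, not both zero, with u f + v g = 0) and f, g both lie in P ⊗_k L where L is the free Lie algebra on y_1,…,y_n, then deg f = deg g. -/
/-!
Lie elements are primitive for the coproduct `Δ` of the free algebra `B = P⟨y₁,…,yₙ⟩` with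
`Δ yᵢ = yᵢ ⊗ 1 + 1 ⊗ yᵢ`. Suppose `u f + v g = 0` with `deg f ≤ deg g`, and let `t` be a word
of `f` of length `deg f`. Right division by `t` turns the relation into `c g = h f` with
`c = f(t) ≠ 0`.

If moreover `deg f < deg g`, then `g(t) = 0`. Applying `Δ` to `c g = h f^k` and reading off the
coefficient of `_ ⊗ t`, the primitivity of `f` and `g` gives `k f(t) h = -(Δh)_t f`, hence
`c' g = h' f^(k+1)` with `c' = k f(t) c`, which is nonzero in characteristic zero. So every power of
`f` divides a nonzero multiple of `g`, which is absurd for degree reasons.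
-/

attribute [local instance] LieRing.ofAssociativeRing

open MonoidAlgebra

namespace FreeMonoidAlgebra

variable {P : Type*} [CommRing P] {σ : Type*}

local notation "B" => MonoidAlgebra P (FreeMonoid σ)
-- `P[M × M]` stands for `B ⊗[P] B`, with `single (a, b) r` playing the role of `r • a ⊗ b`.
local notation "B₂" => MonoidAlgebra P (FreeMonoid σ × FreeMonoid σ)

def IsHomogeneous (d : ℕ) (x : B) : Prop := ∀ w ∈ x.coeff.support, w.length = d

@[elab_as_elim]
lemma IsHomogeneous.induction_on {d : ℕ} {motive : B → Prop} {x : B} (hx : IsHomogeneous d x)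
    (zero : motive 0) (add : ∀ x y, motive x → motive y → motive (x + y))
    (single : ∀ w r, w.length = d → motive (single w r)) : motive x := by
  rw [← sum_coeff_single x]
  exact Finset.sum_induction _ motive add zero fun w hw => single w _ (hx w hw)

lemma IsHomogeneous.le_length_of_mem_support_mul_pow {d : ℕ} {f : B} (hf : IsHomogeneous d f)
    (x : B) (k : ℕ) {w : FreeMonoid σ} (hw : w ∈ (x * f ^ k).coeff.support) :
    k * d ≤ w.length := by
  classical
  induction k generalizing w with
  | zero => simp
  | succ k ih =>
    rw [pow_succ, ← mul_assoc] at hw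
    obtain ⟨a, ha, b, hb, rfl⟩ := Finset.mem_mul.mp (support_coeff_mul_subset _ _ hw)
    rw [FreeMonoid.length_mul, hf b hb, add_mul, one_mul]
    exact Nat.add_le_add_right (ih ha) d

variable (P σ) in
noncomputable def includeLeft : B →ₐ[P] B₂ :=
  mapDomainAlgHom P P (MonoidHom.inl (FreeMonoid σ) (FreeMonoid σ))

variable (P σ) in
noncomputable def includeRight : B →ₐ[P] B₂ :=
  mapDomainAlgHom P P (MonoidHom.inr (FreeMonoid σ) (FreeMonoid σ))

@[simp] lemma includeLeft_single (w : FreeMonoid σ) (r : P) :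
    includeLeft P σ (single w r) = single (w, 1) r := by
  simp [includeLeft]

@[simp] lemma includeRight_single (w : FreeMonoid σ) (r : P) :
    includeRight P σ (single w r) = single (1, w) r := by
  simp [includeRight]

lemma includeLeft_commute_includeRight (x y : B) :
    Commute (includeLeft P σ x) (includeRight P σ y) := by
  induction x using MonoidAlgebra.induction_linear with
  | zero => simp
  | add x x' hx hx' => simpa using hx.add_left hx'
  | single w r =>
    induction y using MonoidAlgebra.induction_linear with
    | zero => simp
    | add y y' hy hy' => simpa using hy.add_right hy'
    | single w' r' =>
      simp only [includeLeft_single, includeRight_single]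
      exact single_commute_single (by simp [Commute, SemiconjBy]) (Commute.all _ _)

variable (P σ) in
noncomputable def comul : B →ₐ[P] B₂ :=
  lift P B₂ (FreeMonoid σ) <| FreeMonoid.lift fun a =>
    includeLeft P σ (of P _ (.of a)) + includeRight P σ (of P _ (.of a))

lemma comul_of_of (a : σ) :
    comul P σ (of P _ (.of a)) =
      includeLeft P σ (of P _ (.of a)) + includeRight P σ (of P _ (.of a)) := by
  simp [comul]

def IsPrimitive (x : B) : Prop := comul P σ x = includeLeft P σ x + includeRight P σ x

variable (P σ) in
noncomputable def primitives : LieSubalgebra P B where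
  carrier := {x | IsPrimitive x}
  add_mem' {x y} hx hy := by simp_all [IsPrimitive]; abel
  zero_mem' := by simp [IsPrimitive]
  smul_mem' c x hx := by simp_all [IsPrimitive]
  lie_mem' {x y} hx hy := by
    simp only [Set.mem_ofPred_eq, IsPrimitive, Ring.lie_def, map_sub, map_mul] at *
    simp only [hx, hy, add_mul, mul_add, (includeLeft_commute_includeRight x y).eq,
      (includeLeft_commute_includeRight y x).eq]
    abel

lemma isPrimitive_of_mem_lieSpan {x : B}
    (hx : x ∈ LieSubalgebra.lieSpan P B (Set.range fun a : σ => of P _ (FreeMonoid.of a))) :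
    IsPrimitive x := by
  refine (LieSubalgebra.lieSpan_le.mpr ?_ : _ ≤ primitives P σ) hx
  rintro _ ⟨a, rfl⟩
  exact comul_of_of a

-- `slice P t` extracts the left tensor factor paired with the word `t` on the right.
variable (P) in
noncomputable def slice (t : FreeMonoid σ) : B₂ →ₗ[P] B where
  toFun z := comapDomain (·, t) (Prod.mk_left_injective t) z
  map_add' := by simp
  map_smul' c z := by ext; simp [Finsupp.comapDomain_apply]

@[simp] lemma coeff_slice (t w : FreeMonoid σ) (z : B₂) :
    (slice P t z).coeff w = z.coeff (w, t) := by
  simp [slice, Finsupp.comapDomain_apply]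

lemma slice_single_self (t a : FreeMonoid σ) (r : P) :
    slice P t (single (a, t) r) = single a r := by
  ext w
  classical simp [Finsupp.single_apply]

lemma slice_single_of_ne {t b : FreeMonoid σ} (h : b ≠ t) (a : FreeMonoid σ) (r : P) :
    slice P t (single (a, b) r) = 0 := by
  ext w
  classical simp [h]

lemma slice_one_of_ne_one {t : FreeMonoid σ} (ht : t ≠ 1) : slice P t (1 : B₂) = 0 :=
  slice_single_of_ne (Ne.symm ht) _ _

lemma slice_one_one : slice P 1 (1 : B₂) = 1 := slice_single_self _ _ _

lemma slice_mul_includeLeft (t : FreeMonoid σ) (z : B₂) (x : B) :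
    slice P t (z * includeLeft P σ x) = slice P t z * x := by
  induction z using MonoidAlgebra.induction_linear with
  | zero => simp
  | add z z' hz hz' => simp [add_mul, hz, hz']
  | single p c =>
    induction x using MonoidAlgebra.induction_linear with
    | zero => simp
    | add x x' hx hx' => simp [mul_add, hx, hx']
    | single w r =>
      obtain ⟨a, b⟩ := p
      rcases eq_or_ne b t with rfl | hb
      · simp [slice_single_self]
      · simp [slice_single_of_ne hb]

lemma slice_includeLeft_of_ne_one {t : FreeMonoid σ} (ht : t ≠ 1) (x : B) :
    slice P t (includeLeft P σ x) = 0 := by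
  simpa [slice_one_of_ne_one ht] using slice_mul_includeLeft t 1 x

lemma slice_one_includeLeft (x : B) : slice P 1 (includeLeft P σ x) = x := by
  simpa [slice_one_one] using slice_mul_includeLeft 1 1 x

lemma slice_includeRight (t : FreeMonoid σ) (y : B) :
    slice P t (includeRight P σ y) = y.coeff t • 1 := by
  induction y using MonoidAlgebra.induction_linear with
  | zero => simp
  | add y y' hy hy' => simp [hy, hy', add_smul]
  | single s r =>
    rcases eq_or_ne s t with rfl | hs
    · simp [slice_single_self, one_def]
    · simp [slice_single_of_ne hs, hs]

lemma slice_mul_includeRight {t : FreeMonoid σ} {y : B} (hy : IsHomogeneous t.length y)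
    (z : B₂) : slice P t (z * includeRight P σ y) = y.coeff t • slice P 1 z := by
  refine hy.induction_on (by simp) (fun y y' hy hy' => by simp [mul_add, hy, hy', add_smul])
    fun s r hs => ?_
  induction z using MonoidAlgebra.induction_linear with
  | zero => simp
  | add z z' hz hz' => rw [add_mul, map_add, hz, hz', map_add, smul_add]
  | single p c =>
    obtain ⟨a, b⟩ := p
    by_cases hbs : b = 1 ∧ s = t
    · obtain ⟨rfl, rfl⟩ := hbs
      simp [slice_single_self, mul_comm]
    · have hne : b * s ≠ t := by
        rintro rfl
        have hb : b = 1 :=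
          FreeMonoid.length_eq_zero.mp (by simpa [FreeMonoid.length_mul] using hs)
        exact hbs ⟨hb, by simp [hb]⟩
      rcases eq_or_ne s t with rfl | hst
      · simp [slice_single_of_ne hne, slice_single_of_ne fun hb => hbs ⟨hb, rfl⟩]
      · simp [slice_single_of_ne hne, hst]

lemma slice_one_mul (z z' : B₂) : slice P 1 (z * z') = slice P 1 z * slice P 1 z' := by
  induction z using MonoidAlgebra.induction_linear with
  | zero => simp
  | add z₁ z₂ h₁ h₂ => simp [add_mul, h₁, h₂]
  | single p c =>
    induction z' using MonoidAlgebra.induction_linear with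
    | zero => simp
    | add z₁ z₂ h₁ h₂ => simp [mul_add, h₁, h₂]
    | single p' c' =>
      obtain ⟨a, b⟩ := p
      obtain ⟨a', b'⟩ := p'
      rcases eq_or_ne b 1 with rfl | hb
      · rcases eq_or_ne b' 1 with rfl | hb'
        · simp [slice_single_self]
        · simp [slice_single_of_ne hb']
      · simp [slice_single_of_ne hb, slice_single_of_ne (mul_ne_one'.mpr (Or.inl hb))]

lemma slice_one_comul (x : B) : slice P 1 (comul P σ x) = x := by
  have : (AlgHom.ofLinearMap (slice P 1) slice_one_one slice_one_mul).comp (comul P σ) =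
      AlgHom.id P B := by
    refine algHom_ext' (FreeMonoid.hom_eq fun a => ?_) (Subsingleton.elim _ _)
    change slice P 1 (comul P σ (of P _ (.of a))) = of P _ (.of a)
    rw [comul_of_of, map_add, slice_one_includeLeft, slice_includeRight]
    simp
  exact congr($this x)

namespace IsPrimitive

variable {f : MonoidAlgebra P (FreeMonoid σ)} (hf : IsPrimitive f)
include hf

lemma coeff_one : f.coeff 1 = 0 := by
  have h := slice_one_comul f
  rw [hf, map_add, slice_one_includeLeft, slice_includeRight, add_eq_left] at h
  simpa [one_def] using congr(($h).coeff 1)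

lemma slice_comul {t : FreeMonoid σ} (ht : t ≠ 1) : slice P t (comul P σ f) = f.coeff t • 1 := by
  rw [hf, map_add, slice_includeLeft_of_ne_one ht, slice_includeRight, zero_add]

lemma slice_comul_mul {t : FreeMonoid σ} (hft : IsHomogeneous t.length f) (x : B) :
    slice P t (comul P σ (x * f)) = slice P t (comul P σ x) * f + f.coeff t • x := by
  rw [map_mul, hf, mul_add, map_add, slice_mul_includeLeft, slice_mul_includeRight hft,
    slice_one_comul]

lemma slice_comul_mul_pow {t : FreeMonoid σ} (hft : IsHomogeneous t.length f) (x : B)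
    (k : ℕ) :
    slice P t (comul P σ (x * f ^ (k + 1))) =
      slice P t (comul P σ x) * f ^ (k + 1) + ((k + 1 : P) * f.coeff t) • (x * f ^ k) := by
  induction k with
  | zero => simpa using hf.slice_comul_mul hft x
  | succ k ih =>
    rw [pow_succ f (k + 1), ← mul_assoc, hf.slice_comul_mul hft, ih]
    push_cast
    simp only [add_mul, mul_assoc, smul_mul_assoc, ← pow_succ, add_smul, one_mul]
    abel

end IsPrimitive

lemma _root_.FreeMonoid.exists_eq_mul_of_mul_eq_mul {m t a s : FreeMonoid σ} (h : m * t = a * s)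
    (hts : t.length ≤ s.length) : ∃ s', s = s' * t := by
  have hsuf : t.toList <:+ s.toList :=
    List.suffix_of_suffix_length_le ⟨m.toList, by rw [← FreeMonoid.toList_mul, h]; rfl⟩
      (List.suffix_append _ _) hts
  obtain ⟨s', hs'⟩ := hsuf
  exact ⟨.ofList s', FreeMonoid.toList.injective (by simpa using hs'.symm)⟩

variable (P) in
noncomputable def rightQuot (t : FreeMonoid σ) : B →ₗ[P] B where
  toFun x := comapDomain (· * t) (mul_left_injective t) x
  map_add' := by simp
  map_smul' c x := by ext; simp [Finsupp.comapDomain_apply]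

@[simp] lemma coeff_rightQuot (t w : FreeMonoid σ) (x : B) :
    (rightQuot P t x).coeff w = x.coeff (w * t) := by
  simp [rightQuot, Finsupp.comapDomain_apply]

lemma rightQuot_of_isHomogeneous {t : FreeMonoid σ} {x : B} (hx : IsHomogeneous t.length x) :
    rightQuot P t x = x.coeff t • 1 := by
  ext w
  rcases eq_or_ne w 1 with rfl | hw
  · simp [one_def]
  · have : w * t ∉ x.coeff.support := fun hwt => by
      have := hx _ hwt
      rw [FreeMonoid.length_mul, add_eq_right, FreeMonoid.length_eq_zero] at this
      exact hw this
    simp [Finsupp.notMem_support_iff.mp this, one_def, Ne.symm hw]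

lemma rightQuot_mul {t : FreeMonoid σ} {d : ℕ} {y : B} (hy : IsHomogeneous d y)
    (hd : t.length ≤ d) (x : B) : rightQuot P t (x * y) = x * rightQuot P t y := by
  refine hy.induction_on (by simp) (fun y y' hy hy' => by simp only [mul_add, map_add, hy, hy'])
    fun s r hs => ?_
  induction x using MonoidAlgebra.induction_linear with
  | zero => simp
  | add x x' hx hx' => simp only [add_mul, map_add, hx, hx']
  | single a c =>
    by_cases hst : ∃ s', s = s' * t
    · obtain ⟨s', rfl⟩ := hst
      simp [rightQuot, ← mul_assoc]
    · have hne : ∀ m, m * t ≠ a * s := fun m h =>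
        hst (FreeMonoid.exists_eq_mul_of_mul_eq_mul h (hs ▸ hd))
      have hne' : ∀ m, m * t ≠ s := fun m h => hst ⟨m, h.symm⟩
      simp [rightQuot, hne, hne']

lemma exists_smul_eq_mul_of_left_dependent [IsDomain P] {f g u v : B} {df dg : ℕ} (hf0 : f ≠ 0)
    (hf : IsHomogeneous df f) (hg : IsHomogeneous dg g) (hle : df ≤ dg)
    (huv : ¬(u = 0 ∧ v = 0)) (hdep : u * f + v * g = 0) :
    ∃ c ≠ (0 : P), ∃ h : B, c • g = h * f := by
  obtain ⟨t, ht⟩ : f.coeff.support.Nonempty := by simpa [coeff_inj] using hf0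
  have htd : t.length = df := hf t ht
  have hv : v ≠ 0 := by
    rintro rfl
    simp_all
  refine ⟨f.coeff t, Finsupp.mem_support_iff.mp ht, rightQuot P t g, ?_⟩
  have hquot : f.coeff t • u = -(v * rightQuot P t g) := by
    have := congr(rightQuot P t $hdep)
    rw [map_add, rightQuot_mul hf htd.le, rightQuot_mul hg (htd ▸ hle),
      rightQuot_of_isHomogeneous (htd ▸ hf), map_zero, mul_smul_comm, mul_one] at this
    exact eq_neg_of_add_eq_zero_left this
  have : v * (f.coeff t • g - rightQuot P t g * f) = 0 :=
    calc v * (f.coeff t • g - rightQuot P t g * f)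
        = f.coeff t • (v * g) - v * rightQuot P t g * f := by
          rw [mul_sub, mul_smul_comm, mul_assoc]
      _ = f.coeff t • -(u * f) + (f.coeff t • u) * f := by
          rw [eq_neg_of_add_eq_zero_right hdep, hquot, neg_mul, sub_eq_add_neg]
      _ = 0 := by rw [smul_neg, smul_mul_assoc, neg_add_cancel]
  exact sub_eq_zero.mp ((mul_eq_zero.mp this).resolve_left hv)

namespace IsPrimitive

variable [IsDomain P] {f g : MonoidAlgebra P (FreeMonoid σ)}

lemma smul_eq_mul_pow_succ_succ (hf : IsPrimitive f) (hg : IsPrimitive g) (hf0 : f ≠ 0)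
    {t : FreeMonoid σ} (hft : IsHomogeneous t.length f) (ht : t ≠ 1) (hgt : g.coeff t = 0)
    {c : P} {h : B} {k : ℕ} (hcg : c • g = h * f ^ (k + 1)) :
    ((k + 1 : P) * f.coeff t * c) • g = -slice P t (comul P σ h) * f ^ (k + 2) := by
  set a : P := (k + 1 : P) * f.coeff t
  have hsum : (slice P t (comul P σ h) * f + a • h) * f ^ k = 0 := by
    have := congr(slice P t (comul P σ $hcg))
    rw [map_smul, map_smul, hg.slice_comul ht, hgt, zero_smul, smul_zero,
      hf.slice_comul_mul_pow hft] at this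
    rw [add_mul, mul_assoc, ← pow_succ', smul_mul_assoc, this]
  have hah : a • h = -(slice P t (comul P σ h) * f) :=
    eq_neg_of_add_eq_zero_right ((mul_eq_zero.mp hsum).resolve_right (pow_ne_zero k hf0))
  rw [mul_smul, hcg, ← smul_mul_assoc, hah, neg_mul, neg_mul, mul_assoc, ← pow_succ']

lemma smul_ne_mul [CharZero P] (hf : IsPrimitive f) (hg : IsPrimitive g) (hf0 : f ≠ 0)
    (hg0 : g ≠ 0) {df dg : ℕ} (hfd : IsHomogeneous df f) (hgd : IsHomogeneous dg g)
    (hne : df ≠ dg) {c : P} (hc : c ≠ 0) (h : B) : c • g ≠ h * f := by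
  intro hcg
  obtain ⟨t, ht⟩ : f.coeff.support.Nonempty := by simpa [coeff_inj] using hf0
  have htd : t.length = df := hfd t ht
  have ht1 : t ≠ 1 := by
    rintro rfl
    exact Finsupp.mem_support_iff.mp ht hf.coeff_one
  have hgt : g.coeff t = 0 := Finsupp.notMem_support_iff.mp fun hg' => hne (htd ▸ hgd t hg')
  have hpow : ∀ k : ℕ, ∃ c ≠ (0 : P), ∃ h : B, c • g = h * f ^ (k + 1) := by
    intro k
    induction k with
    | zero => exact ⟨c, hc, h, by rw [zero_add, pow_one, hcg]⟩
    | succ k ih =>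
      obtain ⟨c, hc, h, hcg⟩ := ih
      exact ⟨_, mul_ne_zero (mul_ne_zero (Nat.cast_add_one_ne_zero k)
        (Finsupp.mem_support_iff.mp ht)) hc, _,
        hf.smul_eq_mul_pow_succ_succ hg hf0 (htd ▸ hfd) ht1 hgt hcg⟩
  obtain ⟨c, hc, h, hcg⟩ := hpow dg
  obtain ⟨w, hw⟩ : g.coeff.support.Nonempty := by simpa [coeff_inj] using hg0
  have hw' : w ∈ (h * f ^ (dg + 1)).coeff.support := by
    rw [← hcg, coeff_smul, Finsupp.support_smul_eq hc]
    exact hw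
  have hdf : 1 ≤ df := htd ▸ Nat.pos_of_ne_zero (mt FreeMonoid.length_eq_zero.mp ht1)
  have := hfd.le_length_of_mem_support_mul_pow h (dg + 1) hw'
  rw [hgd w hw] at this
  nlinarith

end IsPrimitive

end FreeMonoidAlgebra

open FreeMonoidAlgebra in
/-- Lemma 12: if `f` and `g` are nonzero homogeneous elements of `P ⊗ L` (Lie
elements with coefficients in `P`) inside the free associative algebra
`B = P⟨y₁,…,yₙ⟩` over an integral domain `P`, and `f, g` are left dependent over
`B`, then `deg f = deg g`. -/
theorem stmt16 (k : Type*) [Field k] [CharZero k]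
    (P : Type*) [CommRing P] [IsDomain P] [Algebra k P] (n : ℕ)
    (f g : MonoidAlgebra P (FreeMonoid (Fin n)))
    (hf0 : f ≠ 0) (hg0 : g ≠ 0)
    (df dg : ℕ)
    (hfhom : ∀ w ∈ f.coeff.support, (FreeMonoid.toList w).length = df)
    (hghom : ∀ w ∈ g.coeff.support, (FreeMonoid.toList w).length = dg)
    (hfL : f ∈ LieSubalgebra.lieSpan P (MonoidAlgebra P (FreeMonoid (Fin n)))
      (Set.range fun i : Fin n => MonoidAlgebra.of P (FreeMonoid (Fin n)) (FreeMonoid.of i)))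
    (hgL : g ∈ LieSubalgebra.lieSpan P (MonoidAlgebra P (FreeMonoid (Fin n)))
      (Set.range fun i : Fin n => MonoidAlgebra.of P (FreeMonoid (Fin n)) (FreeMonoid.of i)))
    (hdep : ∃ u v : MonoidAlgebra P (FreeMonoid (Fin n)),
      ¬ (u = 0 ∧ v = 0) ∧ u * f + v * g = 0) :
    df = dg := by
  have : CharZero P := charZero_of_injective_algebraMap (algebraMap k P).injective
  obtain ⟨u, v, huv, hdep⟩ := hdep
  by_contra hne
  wlog hle : df ≤ dg generalizing f g u v df dg
  · exact this g f hg0 hf0 dg df hghom hfhom hgL hfL v u (by tauto) (by rwa [add_comm])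
      (Ne.symm hne) (by omega)
  obtain ⟨c, hc, h, hcg⟩ := exists_smul_eq_mul_of_left_dependent hf0 hfhom hghom hle huv hdep
  exact (isPrimitive_of_mem_lieSpan hfL).smul_ne_mul (isPrimitive_of_mem_lieSpan hgL) hf0 hg0
    hfhom hghom hne hc h hcg
end

section
/- Let P = k{x_1,…,x_n} be the free Poisson algebra over a field k of characteristic 0 and P^e its universal enveloping algebra, with the h-degree filtration where elements of P have h-degree 0 and each h_{x_i} has h-degree 1. If u, v are nonzero elements of P^e with leading monomials (words in h_{x_1},…,h_{x_n}) w_u, w_v and leading coefficients p_u, p_v ∈ P, then uv is nonzero with leading monomial w_u w_v (concatenation) and leading coefficient p_u p_v. -/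
/-!
Moving `ι p'` to the left past a word `h_w` only produces commutator terms `ι q · h_z` with `z`
shorter than `w`. Hence `(ι p · h_w) (ι p' · h_w') ≡ ι (p p') · h_(w w')` modulo words of length
`< |w| + |w'|`, so `NF (u v)` is the product `NF u * NF v` in the monoid algebra up to words
shorter than `wu wv`. The degree-lexicographic order is compatible with concatenation, so in that
product `wu wv` arises only as `wu · wv`, with coefficient `pu pv ≠ 0`, and every other word is
smaller.
-/

/-- Degree-then-lexicographic strict order on words. -/
def wlt {m : ℕ} (u v : FreeMonoid (Fin m)) : Prop :=
  (FreeMonoid.toList u).length < (FreeMonoid.toList v).length ∨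
    ((FreeMonoid.toList u).length = (FreeMonoid.toList v).length ∧
      List.Lex (· < ·) (FreeMonoid.toList u) (FreeMonoid.toList v))

open FreeMonoid

theorem List.Lex.append_of_length_eq {α : Type*} {r : α → α → Prop} {l₁ l₂ : List α}
    (h : List.Lex r l₁ l₂) (hlen : l₁.length = l₂.length) (s t : List α) :
    List.Lex r (l₁ ++ s) (l₂ ++ t) := by
  induction h with
  | nil => simp at hlen
  | cons _ ih => exact .cons (ih (by simpa using hlen))
  | rel h => exact .rel h

section WordOrder

variable {m : ℕ}

theorem wlt_iff {u v : FreeMonoid (Fin m)} :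
    wlt u v ↔ u.length < v.length ∨ (u.length = v.length ∧ List.Lex (· < ·) u.toList v.toList) :=
  Iff.rfl

theorem wlt.length_le {u v : FreeMonoid (Fin m)} (h : wlt u v) : u.length ≤ v.length :=
  h.elim le_of_lt fun h => h.1.le

theorem wlt_irrefl (w : FreeMonoid (Fin m)) : ¬ wlt w w := by
  rintro (h | ⟨-, h⟩)
  · exact lt_irrefl _ h
  · exact List.Lex.to_ne (h.imp fun _ _ => ne_of_lt) rfl

theorem wlt_mul_left (a : FreeMonoid (Fin m)) {b b' : FreeMonoid (Fin m)} (h : wlt b b') :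
    wlt (a * b) (a * b') := by
  rw [wlt_iff] at h ⊢
  simp only [length_mul, toList_mul]
  rcases h with h | ⟨h, hlex⟩
  · exact .inl (by omega)
  · exact .inr ⟨by omega, hlex.append_left _ _⟩

theorem wlt_mul_of_wlt_of_length_le {a a' b b' : FreeMonoid (Fin m)} (ha : wlt a a')
    (hb : b.length ≤ b'.length) : wlt (a * b) (a' * b') := by
  rw [wlt_iff] at ha ⊢
  simp only [length_mul, toList_mul]
  rcases ha with ha | ⟨ha, hlex⟩
  · exact .inl (by omega)
  · rcases hb.lt_or_eq with hb | hb
    · exact .inl (by omega)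
    · exact .inr ⟨by omega, hlex.append_of_length_eq ha _ _⟩

theorem wlt_mul {a a' b b' : FreeMonoid (Fin m)} (ha : a = a' ∨ wlt a a') (hb : b = b' ∨ wlt b b')
    (hne : a ≠ a' ∨ b ≠ b') : wlt (a * b) (a' * b') := by
  rcases ha with rfl | ha
  · rcases hb with rfl | hb
    · simp at hne
    · exact wlt_mul_left a hb
  · exact wlt_mul_of_wlt_of_length_le ha (by rcases hb with rfl | hb; exacts [le_rfl, hb.length_le])

end WordOrder

section LeadingWord

variable {m : ℕ} {R : Type*} [Semiring R]

def SupportLE (c : MonoidAlgebra R (FreeMonoid (Fin m))) (w : FreeMonoid (Fin m)) : Prop :=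
  ∀ z ∈ c.coeff.support, z ≠ w → wlt z w

variable {c d : MonoidAlgebra R (FreeMonoid (Fin m))} {w w' : FreeMonoid (Fin m)}

theorem SupportLE.eq_or_wlt (hc : SupportLE c w) {z : FreeMonoid (Fin m)}
    (hz : z ∈ c.coeff.support) : z = w ∨ wlt z w :=
  or_iff_not_imp_left.mpr (hc z hz)

theorem SupportLE.length_le (hc : SupportLE c w) {z : FreeMonoid (Fin m)}
    (hz : z ∈ c.coeff.support) : z.length ≤ w.length := by
  rcases hc.eq_or_wlt hz with rfl | h
  exacts [le_rfl, h.length_le]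

theorem SupportLE.coeff_mul (hc : SupportLE c w) (hd : SupportLE d w') :
    (c * d).coeff (w * w') = c.coeff w * d.coeff w' := by
  refine MonoidAlgebra.coeff_mul_mul_of_uniqueMul fun a b ha hb hab => ?_
  by_contra hne
  exact wlt_irrefl _ (hab ▸ wlt_mul (hc.eq_or_wlt ha) (hd.eq_or_wlt hb) (not_and_or.mp hne))

theorem SupportLE.mul (hc : SupportLE c w) (hd : SupportLE d w') : SupportLE (c * d) (w * w') := by
  classical
  intro z hz hne
  obtain ⟨a, ha, b, hb, rfl⟩ := Finset.mem_mul.mp (MonoidAlgebra.support_coeff_mul_subset c d hz)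
  refine wlt_mul (hc.eq_or_wlt ha) (hd.eq_or_wlt hb) ?_
  by_contra! h
  exact hne (by rw [h.1, h.2])

theorem SupportLE.add_of_length_lt (hc : SupportLE c w)
    (hd : ∀ z ∈ d.coeff.support, z.length < w.length) : SupportLE (c + d) w := by
  classical
  intro z hz hne
  rcases Finset.mem_union.mp (Finsupp.support_add hz) with hz | hz
  exacts [hc z hz hne, .inl (hd z hz)]

end LeadingWord

section WordFiltration

variable {k P Pe : Type*} [CommSemiring k] [Semiring P] [Algebra k P] [Ring Pe] [Algebra k Pe]
  {n : ℕ} (ι : P →ₐ[k] Pe) (h : Fin n → Pe)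

def CommutatorsInRange : Prop :=
  ∀ (i : Fin n) (p : P), ∃ q : P, h i * ι p = ι p * h i + ι q

def wordFiltration (L : ℕ) : Submodule k Pe :=
  Submodule.span k {x | ∃ (p : P) (w : FreeMonoid (Fin n)), w.length < L ∧ x = ι p * lift h w}

variable {ι h}

theorem wordFiltration_mono {L L' : ℕ} (hL : L ≤ L') :
    wordFiltration ι h L ≤ wordFiltration ι h L' :=
  Submodule.span_mono fun _ ⟨p, w, hw, hx⟩ => ⟨p, w, hw.trans_le hL, hx⟩

theorem iota_mul_lift_mem_wordFiltration (p : P) {w : FreeMonoid (Fin n)} {L : ℕ}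
    (hw : w.length < L) : ι p * lift h w ∈ wordFiltration ι h L :=
  Submodule.subset_span ⟨p, w, hw, rfl⟩

theorem wordFiltration_le_comap {f : Pe →ₗ[k] Pe} {L L' : ℕ}
    (hf : ∀ (p : P) (w : FreeMonoid (Fin n)), w.length < L →
      f (ι p * lift h w) ∈ wordFiltration ι h L') :
    wordFiltration ι h L ≤ (wordFiltration ι h L').comap f :=
  Submodule.span_le.mpr fun _ ⟨p, w, hw, hx⟩ => hx ▸ hf p w hw

theorem iota_mul_mem_wordFiltration (p : P) {L : ℕ} {x : Pe} (hx : x ∈ wordFiltration ι h L) :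
    ι p * x ∈ wordFiltration ι h L :=
  wordFiltration_le_comap (f := LinearMap.mulLeft k (ι p))
    (fun p' w hw => by
      simpa only [LinearMap.mulLeft_apply, ← mul_assoc, ← map_mul]
        using iota_mul_lift_mem_wordFiltration (p * p') hw) hx

theorem mul_lift_mem_wordFiltration (w' : FreeMonoid (Fin n)) {L : ℕ} {x : Pe}
    (hx : x ∈ wordFiltration ι h L) : x * lift h w' ∈ wordFiltration ι h (L + w'.length) :=
  wordFiltration_le_comap (f := LinearMap.mulRight k (lift h w'))
    (fun p w hw => by
      simpa only [LinearMap.mulRight_apply, mul_assoc, ← map_mul]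
        using iota_mul_lift_mem_wordFiltration p (w := w * w') (by simp; omega)) hx

theorem gen_mul_mem_wordFiltration (hcomm : CommutatorsInRange ι h) (i : Fin n) {L : ℕ} {x : Pe}
    (hx : x ∈ wordFiltration ι h L) : h i * x ∈ wordFiltration ι h (L + 1) :=
  wordFiltration_le_comap (f := LinearMap.mulLeft k (h i))
    (fun p w hw => by
      obtain ⟨q, hq⟩ := hcomm i p
      have : h i * (ι p * lift h w) = ι p * lift h (of i * w) + ι q * lift h w := by
        rw [map_mul, lift_eval_of, ← mul_assoc, hq, add_mul, mul_assoc]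
      rw [LinearMap.mulLeft_apply, this]
      exact add_mem (iota_mul_lift_mem_wordFiltration p (by simp; omega))
        (iota_mul_lift_mem_wordFiltration q (by omega))) hx

theorem lift_mul_iota_sub_mem_wordFiltration (hcomm : CommutatorsInRange ι h)
    (w : FreeMonoid (Fin n)) (p : P) :
    lift h w * ι p - ι p * lift h w ∈ wordFiltration ι h w.length := by
  induction w using FreeMonoid.inductionOn' generalizing p with
  | one => simp
  | of_mul i w ih =>
    obtain ⟨q, hq⟩ := hcomm i p
    have : lift h (of i * w) * ι p - ι p * lift h (of i * w) =
        h i * (lift h w * ι p - ι p * lift h w) + ι q * lift h w := by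
      rw [map_mul, lift_eval_of, mul_sub, ← mul_assoc (h i) (ι p), hq]
      noncomm_ring
    rw [this, length_mul, length_of, add_comm 1]
    exact add_mem (gen_mul_mem_wordFiltration hcomm i (ih p))
      (iota_mul_lift_mem_wordFiltration q (by omega))

theorem iota_mul_lift_mul_sub_mem_wordFiltration (hcomm : CommutatorsInRange ι h)
    (w w' : FreeMonoid (Fin n)) (p p' : P) :
    ι p * lift h w * (ι p' * lift h w') - ι (p * p') * lift h (w * w') ∈
      wordFiltration ι h (w.length + w'.length) := by
  have : ι p * lift h w * (ι p' * lift h w') - ι (p * p') * lift h (w * w') =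
      ι p * ((lift h w * ι p' - ι p' * lift h w) * lift h w') := by
    rw [map_mul, map_mul]
    noncomm_ring
  rw [this]
  exact iota_mul_mem_wordFiltration p
    (mul_lift_mem_wordFiltration w' (lift_mul_iota_sub_mem_wordFiltration hcomm w p'))

end WordFiltration

section NormalForm

variable {k P Pe : Type*} [CommSemiring k] [Ring P] [Algebra k P] [Ring Pe] [Algebra k Pe]
  {n : ℕ} (ι : P →ₐ[k] Pe) (h : Fin n → Pe)

def IsNormalForm (NF : Pe ≃ₗ[k] MonoidAlgebra P (FreeMonoid (Fin n))) : Prop :=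
  ∀ c : MonoidAlgebra P (FreeMonoid (Fin n)),
    NF.symm c = Finsupp.sum c.coeff fun w p => ι p * ((FreeMonoid.toList w).map h).prod

variable {ι h} {NF : Pe ≃ₗ[k] MonoidAlgebra P (FreeMonoid (Fin n))}

theorem IsNormalForm.symm_eq_sum (hNF : IsNormalForm ι h NF)
    (c : MonoidAlgebra P (FreeMonoid (Fin n))) :
    NF.symm c = c.coeff.sum fun w p => ι p * lift h w := by
  simp only [hNF c, lift_apply]

theorem IsNormalForm.symm_single (hNF : IsNormalForm ι h NF) (w : FreeMonoid (Fin n)) (p : P) :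
    NF.symm (MonoidAlgebra.single w p) = ι p * lift h w := by
  rw [hNF.symm_eq_sum, MonoidAlgebra.coeff_single, Finsupp.sum_single_index (by simp)]

theorem IsNormalForm.symm_mul (hNF : IsNormalForm ι h NF)
    (c d : MonoidAlgebra P (FreeMonoid (Fin n))) :
    NF.symm (c * d) =
      c.coeff.sum fun w p => d.coeff.sum fun w' p' => ι (p * p') * lift h (w * w') := by
  simp only [MonoidAlgebra.mul_def, map_finsuppSum, hNF.symm_single]

theorem IsNormalForm.wordFiltration_le_comap (hNF : IsNormalForm ι h NF) (L : ℕ) :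
    wordFiltration ι h L ≤
      (MonoidAlgebra.supported k P {z | z.length < L}).comap NF.toLinearMap := by
  refine Submodule.span_le.mpr ?_
  rintro _ ⟨p, w, hw, rfl⟩
  classical
  rw [SetLike.mem_coe, Submodule.mem_comap, LinearEquiv.coe_coe, ← hNF.symm_single,
    LinearEquiv.apply_symm_apply, MonoidAlgebra.mem_supported, MonoidAlgebra.coeff_single]
  exact (Finset.coe_subset.mpr Finsupp.support_single_subset).trans (by simpa using hw)

theorem IsNormalForm.mul_sub_symm_mul_mem_wordFiltration (hNF : IsNormalForm ι h NF)
    (hcomm : CommutatorsInRange ι h) {x y : Pe} {a b : ℕ}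
    (hx : ∀ z ∈ (NF x).coeff.support, z.length ≤ a)
    (hy : ∀ z ∈ (NF y).coeff.support, z.length ≤ b) :
    x * y - NF.symm (NF x * NF y) ∈ wordFiltration ι h (a + b) := by
  have hxy : x * y = NF.symm (NF x) * NF.symm (NF y) := by simp only [LinearEquiv.symm_apply_apply]
  rw [hxy, hNF.symm_eq_sum, hNF.symm_eq_sum, hNF.symm_mul]
  simp only [Finsupp.sum, Finset.sum_mul_sum, ← Finset.sum_sub_distrib]
  exact Submodule.sum_mem _ fun z hz => Submodule.sum_mem _ fun z' hz' =>
    wordFiltration_mono (add_le_add (hx z hz) (hy z' hz'))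
      (iota_mul_lift_mul_sub_mem_wordFiltration hcomm z z' _ _)

theorem IsNormalForm.exists_apply_mul_eq_add (hNF : IsNormalForm ι h NF)
    (hcomm : CommutatorsInRange ι h) {x y : Pe} {a b : ℕ}
    (hx : ∀ z ∈ (NF x).coeff.support, z.length ≤ a)
    (hy : ∀ z ∈ (NF y).coeff.support, z.length ≤ b) :
    ∃ E ∈ MonoidAlgebra.supported k P {z | z.length < a + b}, NF (x * y) = NF x * NF y + E :=
  ⟨NF (x * y - NF.symm (NF x * NF y)),
    hNF.wordFiltration_le_comap _ (hNF.mul_sub_symm_mul_mem_wordFiltration hcomm hx hy),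
    by rw [map_sub, LinearEquiv.apply_symm_apply, add_sub_cancel]⟩

end NormalForm

theorem stmt17_general (k : Type*) [Field k] (n : ℕ)
    (P : Type*) [CommRing P] [IsDomain P] [Algebra k P]
    (Pe : Type*) [Ring Pe] [Algebra k Pe]
    (ι : P →ₐ[k] Pe)
    (h : Fin n → Pe)
    (NF : Pe ≃ₗ[k] MonoidAlgebra P (FreeMonoid (Fin n)))
    (hNF : ∀ c : MonoidAlgebra P (FreeMonoid (Fin n)),
      NF.symm c = Finsupp.sum c.coeff fun w p => ι p * ((FreeMonoid.toList w).map h).prod)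
    (hcomm : ∀ (i : Fin n) (p : P), ∃ q : P, h i * ι p = ι p * h i + ι q)
    (u v : Pe)
    (wu wv : FreeMonoid (Fin n)) (pu pv : P)
    (hpu : (NF u).coeff wu = pu) (hpu0 : pu ≠ 0)
    (hwu : ∀ w ∈ (NF u).coeff.support, w ≠ wu → wlt w wu)
    (hpv : (NF v).coeff wv = pv) (hpv0 : pv ≠ 0)
    (hwv : ∀ w ∈ (NF v).coeff.support, w ≠ wv → wlt w wv) :
    u * v ≠ 0 ∧ (NF (u * v)).coeff (wu * wv) = pu * pv ∧
      ∀ w ∈ (NF (u * v)).coeff.support, w ≠ wu * wv → wlt w (wu * wv) := by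
  have hu : SupportLE (NF u) wu := hwu
  have hv : SupportLE (NF v) wv := hwv
  obtain ⟨E, hE, hNFuv⟩ :=
    IsNormalForm.exists_apply_mul_eq_add hNF hcomm (fun _ => hu.length_le) (fun _ => hv.length_le)
  have hlead : SupportLE (NF (u * v)) (wu * wv) :=
    hNFuv ▸ (hu.mul hv).add_of_length_lt fun z hz => by simpa using hE hz
  have hcoeff : (NF (u * v)).coeff (wu * wv) = pu * pv := by
    rw [hNFuv, MonoidAlgebra.coeff_add, Finsupp.add_apply, hu.coeff_mul hv, hpu, hpv,
      MonoidAlgebra.mem_supported'.mp hE _ (by simp), add_zero]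
  refine ⟨fun huv => mul_ne_zero hpu0 hpv0 ?_, hcoeff, hlead⟩
  rwa [huv, map_zero, MonoidAlgebra.coeff_zero, Finsupp.zero_apply, eq_comm] at hcoeff

/-- Lemma 7: in the universal enveloping algebra `Pe` of the free Poisson algebra —
presented via its normal form `NF : Pe ≃ MonoidAlgebra P (words in h_{x_1},…,h_{x_n})`
with `NF⁻¹(Σ p_w · w) = Σ ι(p_w) · h_w` and the commutation relation
`h_i · ι p = ι p · h_i + ι q` — leading monomials and leading coefficients are
multiplicative: if `u, v ≠ 0` have leading monomials `wu, wv` and leading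
coefficients `pu, pv`, then `uv ≠ 0` has leading monomial `wu·wv` (concatenation)
and leading coefficient `pu·pv`. -/
theorem stmt17 (k : Type*) [Field k] [CharZero k] (n : ℕ)
    (P : Type*) [CommRing P] [IsDomain P] [Algebra k P]
    (Pe : Type*) [Ring Pe] [Algebra k Pe]
    (ι : P →ₐ[k] Pe) (hι : Function.Injective ι)
    (h : Fin n → Pe)
    (NF : Pe ≃ₗ[k] MonoidAlgebra P (FreeMonoid (Fin n)))
    (hNF : ∀ c : MonoidAlgebra P (FreeMonoid (Fin n)),
      NF.symm c = Finsupp.sum c.coeff fun w p => ι p * ((FreeMonoid.toList w).map h).prod)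
    (hcomm : ∀ (i : Fin n) (p : P), ∃ q : P, h i * ι p = ι p * h i + ι q)
    (u v : Pe) (hu : u ≠ 0) (hv : v ≠ 0)
    (wu wv : FreeMonoid (Fin n)) (pu pv : P)
    (hpu : (NF u).coeff wu = pu) (hpu0 : pu ≠ 0)
    (hwu : ∀ w ∈ (NF u).coeff.support, w ≠ wu → wlt w wu)
    (hpv : (NF v).coeff wv = pv) (hpv0 : pv ≠ 0)
    (hwv : ∀ w ∈ (NF v).coeff.support, w ≠ wv → wlt w wv) :
    u * v ≠ 0 ∧ (NF (u * v)).coeff (wu * wv) = pu * pv ∧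
      ∀ w ∈ (NF (u * v)).coeff.support, w ≠ wu * wv → wlt w (wu * wv) :=
  stmt17_general k n P Pe ι h NF hNF hcomm u v wu wv pu pv hpu hpu0 hwu hpv hpv0 hwv
end

section
/- Let P = k{x_1,…,x_n} be the free Poisson algebra over a field k of characteristic 0 and P^e its universal enveloping algebra. Let s_1,…,s_k ∈ P^e be nonzero elements written in normal form with leading monomials ldm(s_i) (words in h_{x_1},…,h_{x_n}). If for all i ≠ j neither ldm(s_i) is a left divisor of ldm(s_j) nor vice versa (u is a left divisor of v if v = tu for some word t), then s_1,…,s_k are left independent over P^e: the only solution of Σ u_r s_r = 0 with u_r ∈ P^e is u_1 = … = u_k = 0. -/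
theorem List.append_lt_append_right {α : Type*} [LT α] {l₁ l₂ : List α} (h : l₁ < l₂)
    (hlen : l₁.length = l₂.length) (t : List α) : l₁ ++ t < l₂ ++ t := by
  induction h with
  | nil => simp at hlen
  | cons _ ih => exact List.Lex.cons (ih (by simpa using hlen))
  | rel h => exact List.Lex.rel h

namespace FreeMonoid

variable {σ : Type*}

theorem exists_eq_mul_or_exists_eq_mul_of_mul_eq_mul {a b u v : FreeMonoid σ}
    (h : a * u = b * v) : (∃ t, u = t * v) ∨ ∃ t, v = t * u := by
  rcases List.append_eq_append_iff.1 (congrArg toList h) with ⟨t, -, ht⟩ | ⟨t, -, ht⟩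
  · exact Or.inl ⟨ofList t, toList.injective (by simpa using ht)⟩
  · exact Or.inr ⟨ofList t, toList.injective (by simpa using ht)⟩

def degLex (u : FreeMonoid σ) : ℕ ×ₗ List σ := toLex (u.length, u.toList)

theorem degLex_injective : Function.Injective (degLex : FreeMonoid σ → ℕ ×ₗ List σ) :=
  fun _ _ huv => toList.injective (congrArg (fun p => (ofLex p).2) huv)

variable [LinearOrder σ]

theorem degLex_lt_degLex {u v : FreeMonoid σ} :
    degLex u < degLex v ↔ u.length < v.length ∨ u.length = v.length ∧ u.toList < v.toList :=
  Prod.Lex.toLex_lt_toLex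

theorem length_le_of_degLex_le {u v : FreeMonoid σ} (h : degLex u ≤ degLex v) :
    u.length ≤ v.length :=
  (Prod.Lex.toLex_le_toLex.1 h).elim le_of_lt (·.1.le)

theorem degLex_lt_of_length_lt {u v : FreeMonoid σ} (h : u.length < v.length) :
    degLex u < degLex v :=
  degLex_lt_degLex.2 (Or.inl h)

theorem degLex_mul_lt_mul_left (t : FreeMonoid σ) {u v : FreeMonoid σ}
    (h : degLex u < degLex v) : degLex (t * u) < degLex (t * v) := by
  simp only [degLex_lt_degLex, length_mul, toList_mul] at h ⊢
  rcases h with h | ⟨h, hl⟩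
  · omega
  · exact Or.inr ⟨by omega, List.append_left_lt hl⟩

theorem degLex_mul_lt_mul_right (t : FreeMonoid σ) {u v : FreeMonoid σ}
    (h : degLex u < degLex v) : degLex (u * t) < degLex (v * t) := by
  simp only [degLex_lt_degLex, length_mul, toList_mul] at h ⊢
  rcases h with h | ⟨h, hl⟩
  · omega
  · exact Or.inr ⟨by omega, List.append_lt_append_right hl h t⟩

theorem degLex_mul_lt_mul_of_lt_of_le {a b c d : FreeMonoid σ} (h₁ : degLex a < degLex b)
    (h₂ : degLex c ≤ degLex d) : degLex (a * c) < degLex (b * d) := by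
  rcases h₂.lt_or_eq with h₂ | h₂
  · exact (degLex_mul_lt_mul_right c h₁).trans (degLex_mul_lt_mul_left b h₂)
  · rw [degLex_injective h₂]
    exact degLex_mul_lt_mul_right d h₁

theorem degLex_mul_lt_mul_of_le_of_lt {a b c d : FreeMonoid σ} (h₁ : degLex a ≤ degLex b)
    (h₂ : degLex c < degLex d) : degLex (a * c) < degLex (b * d) := by
  rcases h₁.lt_or_eq with h₁ | h₁
  · exact degLex_mul_lt_mul_of_lt_of_le h₁ h₂.le
  · rw [degLex_injective h₁]
    exact degLex_mul_lt_mul_left b h₂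

theorem degLex_mul_le_mul {a b c d : FreeMonoid σ} (h₁ : degLex a ≤ degLex b)
    (h₂ : degLex c ≤ degLex d) : degLex (a * c) ≤ degLex (b * d) := by
  rcases h₁.lt_or_eq with h₁ | h₁
  · exact (degLex_mul_lt_mul_of_lt_of_le h₁ h₂).le
  · rw [degLex_injective h₁]
    rcases h₂.lt_or_eq with h₂ | h₂
    · exact (degLex_mul_lt_mul_left b h₂).le
    · rw [degLex_injective h₂]

theorem uniqueMul_of_degLex_le {A B : Finset (FreeMonoid σ)} {a₀ b₀ : FreeMonoid σ}
    (hA : ∀ a ∈ A, degLex a ≤ degLex a₀) (hB : ∀ b ∈ B, degLex b ≤ degLex b₀) :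
    UniqueMul A B a₀ b₀ := by
  intro a b ha hb hab
  by_contra hne
  have hlt : degLex (a * b) < degLex (a₀ * b₀) := by
    rcases not_and_or.1 hne with ha₀ | hb₀
    · exact degLex_mul_lt_mul_of_lt_of_le ((hA a ha).lt_of_ne (degLex_injective.ne ha₀)) (hB b hb)
    · exact degLex_mul_lt_mul_of_le_of_lt (hA a ha) ((hB b hb).lt_of_ne (degLex_injective.ne hb₀))
  exact hlt.ne (congrArg degLex hab)

end FreeMonoid

theorem wlt_iff_degLex_lt {m : ℕ} {u v : FreeMonoid (Fin m)} :
    wlt u v ↔ FreeMonoid.degLex u < FreeMonoid.degLex v :=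
  FreeMonoid.degLex_lt_degLex.symm

namespace NormalForm

open MonoidAlgebra FreeMonoid

variable {σ P Pe : Type*} [Ring P]

variable (P) in
noncomputable abbrev lengthLE (N : ℕ) : Submodule P (MonoidAlgebra P (FreeMonoid σ)) :=
  supported P P {v | v.length ≤ N}

variable (P) in
noncomputable abbrev lengthLT (N : ℕ) : Submodule P (MonoidAlgebra P (FreeMonoid σ)) :=
  supported P P {v | v.length < N}

theorem lengthLT_le_lengthLE (N : ℕ) : lengthLT (σ := σ) P N ≤ lengthLE P N :=
  supported_mono fun _ (hv : _ < N) => (le_of_lt hv : _ ≤ N)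

theorem lengthLE_le_lengthLT_succ (N : ℕ) : lengthLE (σ := σ) P N ≤ lengthLT P (N + 1) :=
  supported_mono fun _ hv => Nat.lt_succ_of_le hv

theorem lengthLT_mono {M N : ℕ} (h : M ≤ N) : lengthLT (σ := σ) P M ≤ lengthLT P N :=
  supported_mono fun _ hv => lt_of_lt_of_le hv h

theorem single_mul_mem_supported {c : MonoidAlgebra P (FreeMonoid σ)} {s : Set (FreeMonoid σ)}
    (hc : c ∈ supported P P s) (a : FreeMonoid σ) (r : P) :
    single a r * c ∈ supported P P ((a * ·) '' s) := by
  classical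
  intro v hv
  obtain ⟨v, hv', rfl⟩ := Finset.mem_image.1 (support_coeff_single_mul_subset c r a hv)
  exact Set.mem_image_of_mem _ (hc hv')

theorem single_mul_mem_lengthLE {c : MonoidAlgebra P (FreeMonoid σ)} {N : ℕ}
    (hc : c ∈ lengthLE P N) (a : FreeMonoid σ) (r : P) :
    single a r * c ∈ lengthLE P (a.length + N) := by
  refine supported_mono ?_ (single_mul_mem_supported hc a r)
  rintro _ ⟨v, hv, rfl⟩
  simpa [length_mul] using hv

theorem single_mul_mem_lengthLT {c : MonoidAlgebra P (FreeMonoid σ)} {N : ℕ}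
    (hc : c ∈ lengthLT P N) (a : FreeMonoid σ) (r : P) :
    single a r * c ∈ lengthLT P (a.length + N) := by
  refine supported_mono ?_ (single_mul_mem_supported hc a r)
  rintro _ ⟨v, hv, rfl⟩
  simpa [length_mul] using hv

section LeadingTerms

variable [LinearOrder σ]

def SupportDegLexLE (c : MonoidAlgebra P (FreeMonoid σ)) (a : FreeMonoid σ) : Prop :=
  ∀ v ∈ c.coeff.support, degLex v ≤ degLex a

theorem SupportDegLexLE.mem_lengthLE {c : MonoidAlgebra P (FreeMonoid σ)} {a : FreeMonoid σ}
    (hc : SupportDegLexLE c a) : c ∈ lengthLE P a.length :=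
  fun _ hv => length_le_of_degLex_le (hc _ hv)

variable {f g e : MonoidAlgebra P (FreeMonoid σ)} {a b : FreeMonoid σ}

theorem coeff_mul_add_of_mem_lengthLT (hf : SupportDegLexLE f a) (hg : SupportDegLexLE g b)
    (he : e ∈ lengthLT P (a.length + b.length)) :
    (f * g + e).coeff (a * b) = f.coeff a * g.coeff b := by
  rw [coeff_add, Finsupp.add_apply, coeff_mul_mul_of_uniqueMul (uniqueMul_of_degLex_le hf hg),
    mem_supported'.1 he _ (by simp [length_mul]), add_zero]

theorem supportDegLexLE_mul_add (hf : SupportDegLexLE f a) (hg : SupportDegLexLE g b)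
    (he : e ∈ lengthLT P (a.length + b.length)) : SupportDegLexLE (f * g + e) (a * b) := by
  classical
  intro v hv
  rcases Finset.mem_union.1 (Finsupp.support_add hv) with hv | hv
  · obtain ⟨a', ha', b', hb', rfl⟩ := Finset.mem_mul.1 (support_coeff_mul_subset f g hv)
    exact degLex_mul_le_mul (hf a' ha') (hg b' hb')
  · exact (degLex_lt_of_length_lt (by simpa [length_mul] using he hv)).le

theorem sum_ne_zero_of_degLex_lt {I : Type*} {S : Finset I}
    {f : I → MonoidAlgebra P (FreeMonoid σ)} {t : I → FreeMonoid σ}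
    (hf : ∀ r ∈ S, SupportDegLexLE (f r) (t r)) {r₀ : I} (hr₀ : r₀ ∈ S)
    (ht : ∀ r ∈ S, r ≠ r₀ → degLex (t r) < degLex (t r₀)) (hc : (f r₀).coeff (t r₀) ≠ 0) :
    ∑ r ∈ S, f r ≠ 0 := by
  intro hsum
  have hcoeff := congrArg (fun c => c.coeff (t r₀)) hsum
  simp only [coeff_sum, Finset.sum_apply', coeff_zero, Finsupp.zero_apply] at hcoeff
  rw [Finset.sum_eq_single_of_mem r₀ hr₀] at hcoeff
  · exact hc hcoeff
  intro r hr hne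
  by_contra hr'
  exact absurd (ht r hr hne) (not_lt.2 (hf r hr _ (Finsupp.mem_support_iff.2 hr')))

end LeadingTerms

section NormalFormMap

variable [Ring Pe] (ι : P →+* Pe) (h : σ → Pe) (NF : Pe ≃+ MonoidAlgebra P (FreeMonoid σ))
  (hNF : ∀ c, NF.symm c = c.coeff.sum fun a p => ι p * lift h a)
include hNF

theorem symm_single (a : FreeMonoid σ) (p : P) : NF.symm (single a p) = ι p * lift h a := by
  rw [hNF, coeff_single]
  exact Finsupp.sum_single_index (by simp)

theorem apply_ringHom_mul (p : P) (x : Pe) : NF (ι p * x) = p • NF x := by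
  suffices ∀ c, NF.symm (p • c) = ι p * NF.symm c by
    apply NF.symm.injective
    rw [this, NF.symm_apply_apply, NF.symm_apply_apply]
  intro c
  induction c using MonoidAlgebra.induction_linear with
  | zero => simp
  | add c₁ c₂ h₁ h₂ => rw [smul_add, map_add, map_add, h₁, h₂, mul_add]
  | single a b =>
    rw [smul_single', symm_single ι h NF hNF, symm_single ι h NF hNF, map_mul, mul_assoc]

-- `q i p` is the Poisson bracket `{x_i, p}`.
variable (q : σ → P → P) (hq : ∀ i p, h i * ι p = ι p * h i + ι (q i p))
include hq

theorem apply_generator_mul_sub_mem (i : σ) {z : Pe} {s : Set (FreeMonoid σ)}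
    (hz : NF z ∈ supported P P s) :
    NF (h i * z) - single (of i) 1 * NF z ∈ supported P P s := by
  set c := NF z
  have hmul : single (of i) 1 * c = c.coeff.sum fun a p => single (of i * a) p := by
    conv_lhs => rw [← sum_coeff_single c]
    simp only [Finsupp.mul_sum, single_mul_single, one_mul]
  have key : NF (h i * z) = single (of i) 1 * c + c.coeff.sum fun a p => single a (q i p) := by
    apply NF.symm.injective
    rw [NF.symm_apply_apply, hmul, ← Finsupp.sum_add, map_finsuppSum]
    conv_lhs => rw [← NF.symm_apply_apply z, hNF, Finsupp.mul_sum]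
    refine Finsupp.sum_congr fun a _ => ?_
    rw [map_add, symm_single ι h NF hNF, symm_single ι h NF hNF, map_mul, lift_eval_of,
      ← mul_assoc, ← mul_assoc, hq, add_mul]
  rw [key, add_sub_cancel_left]
  refine Submodule.sum_mem _ fun a ha => mem_supported.2 ?_
  exact (Finset.coe_subset.2 Finsupp.support_single_subset).trans (by simpa using hz ha)

theorem apply_lift_mul_sub_mem (w : FreeMonoid σ) {y : Pe} {N : ℕ} (hy : NF y ∈ lengthLE P N) :
    NF (lift h w * y) - single w 1 * NF y ∈ lengthLT P (w.length + N) := by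
  induction w using FreeMonoid.inductionOn' with
  | one => simp [← one_def]
  | of_mul i w ih =>
    have hz : NF (lift h w * y) ∈ lengthLE P (w.length + N) := by
      rw [← sub_add_cancel (NF (lift h w * y)) (single w 1 * NF y)]
      exact add_mem (lengthLT_le_lengthLE _ ih) (single_mul_mem_lengthLE hy w 1)
    have hsplit : NF (lift h (of i * w) * y) - single (of i * w) 1 * NF y =
        (NF (h i * (lift h w * y)) - single (of i) 1 * NF (lift h w * y)) +
          single (of i) 1 * (NF (lift h w * y) - single w 1 * NF y) := by
      have e : single (of i * w) (1 : P) = single (of i) 1 * single w 1 := by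
        rw [single_mul_single, one_mul]
      rw [map_mul (lift h), lift_eval_of, mul_assoc, e, mul_assoc, mul_sub]
      abel
    rw [hsplit, length_mul, length_of, add_assoc, add_comm 1]
    exact add_mem
      (lengthLE_le_lengthLT_succ _ (apply_generator_mul_sub_mem ι h NF hNF q hq i hz))
      (by simpa [add_comm] using single_mul_mem_lengthLT ih (of i) 1)

theorem apply_mul_sub_mem {x y : Pe} {A B : ℕ} (hx : NF x ∈ lengthLE P A)
    (hy : NF y ∈ lengthLE P B) : NF (x * y) - NF x * NF y ∈ lengthLT P (A + B) := by
  set c := NF x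
  have hx' : x = c.coeff.sum fun a p => ι p * lift h a := by rw [← hNF, NF.symm_apply_apply]
  have hsum : NF (x * y) - c * NF y =
      c.coeff.sum fun a p => p • (NF (lift h a * y) - single a 1 * NF y) := by
    have hc : c * NF y = c.coeff.sum fun a p => single a p * NF y := by
      conv_lhs => rw [← sum_coeff_single c]
      rw [Finsupp.sum_mul]
    rw [hc, hx', Finsupp.sum_mul, map_finsuppSum, ← Finsupp.sum_sub]
    refine Finsupp.sum_congr fun a _ => ?_
    rw [mul_assoc, apply_ringHom_mul ι h NF hNF, smul_sub, ← smul_mul_assoc, smul_single',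
      mul_one]
  rw [hsum]
  exact Submodule.sum_mem _ fun a ha => Submodule.smul_mem _ _ <|
    lengthLT_mono (Nat.add_le_add_right (hx ha) B) (apply_lift_mul_sub_mem ι h NF hNF q hq a hy)

variable [LinearOrder σ] in
theorem apply_mul_of_supportDegLexLE {x y : Pe} {a b : FreeMonoid σ}
    (hx : SupportDegLexLE (NF x) a) (hy : SupportDegLexLE (NF y) b) :
    (NF (x * y)).coeff (a * b) = (NF x).coeff a * (NF y).coeff b ∧
      SupportDegLexLE (NF (x * y)) (a * b) := by
  have he := apply_mul_sub_mem ι h NF hNF q hq hx.mem_lengthLE hy.mem_lengthLE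
  rw [← add_sub_cancel (NF x * NF y) (NF (x * y))]
  exact ⟨coeff_mul_add_of_mem_lengthLT hx hy he, supportDegLexLE_mul_add hx hy he⟩

end NormalFormMap

end NormalForm

open NormalForm FreeMonoid in
theorem stmt18_general (k : Type*) [Field k] (n : ℕ)
    (P : Type*) [CommRing P] [IsDomain P] [Algebra k P]
    (Pe : Type*) [Ring Pe] [Algebra k Pe]
    (ι : P →ₐ[k] Pe)
    (h : Fin n → Pe)
    (NF : Pe ≃ₗ[k] MonoidAlgebra P (FreeMonoid (Fin n)))
    (hNF : ∀ c : MonoidAlgebra P (FreeMonoid (Fin n)),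
      NF.symm c = Finsupp.sum c.coeff fun w p => ι p * ((FreeMonoid.toList w).map h).prod)
    (hcomm : ∀ (i : Fin n) (p : P), ∃ q : P, h i * ι p = ι p * h i + ι q)
    (K : ℕ) (s : Fin K → Pe)
    (w : Fin K → FreeMonoid (Fin n))
    (hldc : ∀ r, (NF (s r)).coeff (w r) ≠ 0)
    (hldm : ∀ r, ∀ w' ∈ (NF (s r)).coeff.support, w' ≠ w r → wlt w' (w r))
    (hdiv : ∀ i j : Fin K, i ≠ j → ∀ t : FreeMonoid (Fin n), w i ≠ t * w j) :
    ∀ u : Fin K → Pe, ∑ r, u r * s r = 0 → ∀ r, u r = 0 := by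
  classical
  intro u hsum r₀
  by_contra hr₀
  choose q hq using hcomm
  have hNF' : ∀ c, NF.toAddEquiv.symm c =
      c.coeff.sum fun a p => (ι : P →+* Pe) p * lift h a := by
    intro c
    simp only [lift_apply]
    exact hNF c
  have hs_top (r : Fin K) : SupportDegLexLE (NF (s r)) (w r) := fun v hv =>
    (eq_or_ne v (w r)).elim (fun e => e ▸ le_rfl) fun hne =>
      (wlt_iff_degLex_lt.1 (hldm r v hv hne)).le
  set S := Finset.univ.filter (u · ≠ 0)
  have hu_top (r) (hr : r ∈ S) : ∃ a ∈ (NF (u r)).coeff.support, SupportDegLexLE (NF (u r)) a :=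
    (NF (u r)).coeff.support.exists_max_image degLex <| Finsupp.support_nonempty_iff.2 <| by
      simpa [S] using hr
  choose! α hα_mem hα_top using hu_top
  have hlead (r) (hr : r ∈ S) :=
    apply_mul_of_supportDegLexLE (ι : P →+* Pe) h NF.toAddEquiv hNF' q hq (hα_top r hr) (hs_top r)
  obtain ⟨r₁, hr₁, hmax⟩ := S.exists_max_image (fun r => degLex (α r * w r)) ⟨r₀, by simpa [S]⟩
  refine sum_ne_zero_of_degLex_lt (fun r hr => (hlead r hr).2) hr₁ (fun r hr hne => ?_) ?_ ?_
  · refine (hmax r hr).lt_of_ne fun heq => ?_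
    rcases exists_eq_mul_or_exists_eq_mul_of_mul_eq_mul (degLex_injective heq) with
      ⟨t, ht⟩ | ⟨t, ht⟩
    · exact hdiv r r₁ hne t ht
    · exact hdiv r₁ r (Ne.symm hne) t ht
  · rw [(hlead r₁ hr₁).1]
    exact mul_ne_zero (Finsupp.mem_support_iff.1 (hα_mem r₁ hr₁)) (hldc r₁)
  · simp only [← map_sum]
    rw [Finset.sum_filter_of_ne fun r _ hr => left_ne_zero_of_mul hr, hsum, map_zero]

/-- Lemma 9: in the universal enveloping algebra `Pe` of the free Poisson algebra —
presented via its normal form `NF : Pe ≃ MonoidAlgebra P (words in h_{x_1},…,h_{x_n})`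
with `NF⁻¹(Σ p_w · w) = Σ ι(p_w) · h_w` and the commutation relation
`h_i · ι p = ι p · h_i + ι q` — if the leading monomials of nonzero elements
`s_1, …, s_K` are pairwise incomparable under left divisibility of words, then
`s_1, …, s_K` are left independent over `Pe`. -/
theorem stmt18 (k : Type*) [Field k] [CharZero k] (n : ℕ)
    (P : Type*) [CommRing P] [IsDomain P] [Algebra k P]
    (Pe : Type*) [Ring Pe] [Algebra k Pe]
    (ι : P →ₐ[k] Pe) (hι : Function.Injective ι)
    (h : Fin n → Pe)
    (NF : Pe ≃ₗ[k] MonoidAlgebra P (FreeMonoid (Fin n)))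
    (hNF : ∀ c : MonoidAlgebra P (FreeMonoid (Fin n)),
      NF.symm c = Finsupp.sum c.coeff fun w p => ι p * ((FreeMonoid.toList w).map h).prod)
    (hcomm : ∀ (i : Fin n) (p : P), ∃ q : P, h i * ι p = ι p * h i + ι q)
    (K : ℕ) (s : Fin K → Pe) (hs : ∀ r, s r ≠ 0)
    (w : Fin K → FreeMonoid (Fin n))
    (hldc : ∀ r, (NF (s r)).coeff (w r) ≠ 0)
    (hldm : ∀ r, ∀ w' ∈ (NF (s r)).coeff.support, w' ≠ w r → wlt w' (w r))
    (hdiv : ∀ i j : Fin K, i ≠ j → ∀ t : FreeMonoid (Fin n), w i ≠ t * w j) :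
    ∀ u : Fin K → Pe, ∑ r, u r * s r = 0 → ∀ r, u r = 0 :=
  stmt18_general k n P Pe ι h NF hNF hcomm K s w hldc hldm hdiv
end
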